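/- For every 0 ≤ n ≤ d, det(𝔈₀(𝒞) + 𝔈ₙ^♯(𝒞)) = det(𝔈₀(𝒞) − 𝔈ₙ^♯(𝒞)) = |C_{−L}|^{4(2d−n)} · D_n(𝒞)². In particular, the 8d×8d matrices 𝔈₀(𝒞) ± 𝔈ₙ^♯(𝒞) are invertible if and only if D_n(𝒞) ≠ 0. -/

import Mathlib

open Complex Matrix

noncomputable section

def Lv (d : ℕ) : ℤ := if Even d then d / 2 else d

def rv (d : ℕ) : ℤ := if Even d then 1 else 2

/-- The coefficient of `T^k` in `f_𝒞(T) = Σ_{j=0}^d C_{-(L-rj)} T^{d-j}` is `C_{L-rk}`. -/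
def coeffC (d : ℕ) (C : ℤ → ℂ) : ℕ → ℂ := fun k => C (Lv d - rv d * k)

def SCM (a : ℕ → ℂ) (d n : ℕ) : Matrix (Fin n) (Fin n) ℂ :=
  Matrix.of fun j k => if (j : ℕ) ≤ (k : ℕ) then a (d - ((k : ℕ) - (j : ℕ))) else 0

def SCN (a : ℕ → ℂ) (n : ℕ) : Matrix (Fin n) (Fin n) ℂ :=
  Matrix.of fun j k => if (j : ℕ) ≤ (k : ℕ) then a ((k : ℕ) - (j : ℕ)) else 0

def SCL (a : ℕ → ℂ) (d n : ℕ) (ε : ℂ) : Matrix (Fin n ⊕ Fin n) (Fin n ⊕ Fin n) ℂ :=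
  Matrix.fromBlocks (SCM a d n)ᵀ (ε • (SCN a n)ᴴ) (ε • SCN a n)
    ((SCM a d n).map (starRingEnd ℂ))

/-- The Schur–Cohn determinant `D_n(𝒞)`, with `D_0(𝒞) = 1`. -/
def SCD (d : ℕ) (C : ℤ → ℂ) (n : ℕ) : ℂ :=
  if n = 0 then 1 else (SCL (coeffC d C) d n 1).det

/-- The `2d × 2d` lower-triangular Toeplitz matrix `𝔢₀(𝒞)` with `(j,k)`-entry
`C_{−L+r(j−k)}` when `0 ≤ j−k ≤ d` and `0` otherwise. -/
def e0mat (d : ℕ) (C : ℤ → ℂ) : Matrix (Fin (2 * d)) (Fin (2 * d)) ℂ :=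
  Matrix.of fun j k =>
    if (k : ℕ) ≤ (j : ℕ) ∧ (j : ℕ) - (k : ℕ) ≤ d then
      C (-(Lv d) + rv d * ((j : ℕ) - (k : ℕ) : ℕ)) else 0

/-- The `2d × 2d` matrix `𝔢_{1,n}(𝒞)` whose only nonzero entries are the
`(m+j, d+m)`-entries (1-based), equal to `C_{L−rj}`, for `1 ≤ m ≤ n`, `0 ≤ j ≤ d`. -/
def e1mat (d n : ℕ) (C : ℤ → ℂ) : Matrix (Fin (2 * d)) (Fin (2 * d)) ℂ :=
  Matrix.of fun j k =>
    if d ≤ (k : ℕ) ∧ (k : ℕ) + 1 ≤ d + n ∧ (k : ℕ) ≤ (j : ℕ) + d ∧ (j : ℕ) ≤ (k : ℕ) then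
      C (Lv d - rv d * ((j : ℤ) - (k : ℤ) + d)) else 0

/-- The `2d × 2d` matrix `𝔢_{2,n}(𝒞)` whose only nonzero entries are the
`(d−n+m+j, 2d−n+m)`-entries (1-based), equal to `C_{L−rj}`, for `1 ≤ m ≤ n`, `0 ≤ j ≤ d`. -/
def e2mat (d n : ℕ) (C : ℤ → ℂ) : Matrix (Fin (2 * d)) (Fin (2 * d)) ℂ :=
  Matrix.of fun j k =>
    if 2 * d ≤ (k : ℕ) + n ∧ (k : ℕ) ≤ (j : ℕ) + d ∧ (j : ℕ) ≤ (k : ℕ) then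
      C (Lv d - rv d * ((j : ℤ) - (k : ℤ) + d)) else 0

/-- The `2d × 2d` anti-diagonal matrix `J_{2d}`. -/
def Jmat (d : ℕ) : Matrix (Fin (2 * d)) (Fin (2 * d)) ℂ :=
  Matrix.of fun j k => if (j : ℕ) + (k : ℕ) + 1 = 2 * d then 1 else 0

/-- The `8d × 8d` matrix `𝔈₀(𝒞) = blockdiag(𝔢₀, 𝔢₀, ᵗconj(𝔢₀), ᵗconj(𝔢₀))`, indexed by
`Fin 4 × Fin (2d)` (the first coordinate is the block index). -/
def bigE0 (d : ℕ) (C : ℤ → ℂ) :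
    Matrix (Fin 4 × Fin (2 * d)) (Fin 4 × Fin (2 * d)) ℂ :=
  Matrix.of fun p q =>
    if p.1 = q.1 then
      (if (p.1 : ℕ) ≤ 1 then e0mat d C p.2 q.2 else (e0mat d C)ᴴ p.2 q.2)
    else 0

/-- The `8d × 8d` matrix `𝔈ₙ^♯(𝒞)` with `(1,3)`-block `conj(𝔢_{2,n})`, `(2,4)`-block
`conj(𝔢_{1,n})`, `(3,1)`-block `J_{2d}·𝔢_{1,n}·J_{2d}`, `(4,2)`-block `J_{2d}·𝔢_{2,n}·J_{2d}`,
and all other blocks zero. -/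
def bigEsharp (d n : ℕ) (C : ℤ → ℂ) :
    Matrix (Fin 4 × Fin (2 * d)) (Fin 4 × Fin (2 * d)) ℂ :=
  Matrix.of fun p q =>
    if p.1 = 0 ∧ q.1 = 2 then ((e2mat d n C).map (starRingEnd ℂ)) p.2 q.2
    else if p.1 = 1 ∧ q.1 = 3 then ((e1mat d n C).map (starRingEnd ℂ)) p.2 q.2
    else if p.1 = 2 ∧ q.1 = 0 then (Jmat d * e1mat d n C * Jmat d) p.2 q.2
    else if p.1 = 3 ∧ q.1 = 1 then (Jmat d * e2mat d n C * Jmat d) p.2 q.2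
    else 0

/-- The vector `χ ∈ ℂ^{8d}` with first and last entries `1` and all other entries `0`. -/
def chiVec (d : ℕ) : Fin 4 × Fin (2 * d) → ℂ := fun p =>
  if (p.1 = 0 ∧ (p.2 : ℕ) = 0) ∨ (p.1 = 3 ∧ (p.2 : ℕ) + 1 = 2 * d) then 1 else 0

/-- The `8d × 8d` matrix `𝔍 = [[0, I_{4d}],[I_{4d}, 0]]` (swapping blocks `0 ↔ 2`, `1 ↔ 3`). -/
def bigJ (d : ℕ) : Matrix (Fin 4 × Fin (2 * d)) (Fin 4 × Fin (2 * d)) ℂ :=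
  Matrix.of fun p q => if ((p.1 : ℕ) + 2) % 4 = (q.1 : ℕ) ∧ p.2 = q.2 then 1 else 0

/-!
Regrouping the blocks as `(1, 3), (2, 4)` makes `𝔈₀ ± 𝔈ₙ^♯` block diagonal, with two diagonal
blocks of the form `[[T, ±X], [±Y, Tᴴ]]`. Here `T = 𝔢₀` is the lower-triangular Toeplitz matrix of
the reversed polynomial `X ^ d f_𝒞(X⁻¹)`, banded of width `d`, and `X`, `Y` keep `n` consecutive
columns of `Tᴴ` and `T` (this is what the flips by `J_{2d}` achieve); the sign disappears after
conjugating by `diag(1, -1)`. The Schur complement gives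
`det [[T, X], [Y, Tᴴ]] = |det T|² det (1 - T⁻ᴴ Y T⁻¹ X)`, and `det (1 - AB) = det (1 - BA)` shrinks
the last determinant to size `n`. Because `T⁻¹` is again lower-triangular Toeplitz (its symbol is
the inverse power series) and `T` is banded, the `n × n` factors are the corresponding sections
of `T⁻¹` and the Schur–Cohn block `N_n`. Running the same Schur-complement computation on
`L_n^+(f_𝒞)` shows that each diagonal block has determinant `|C_{-L}|^{2(2d-n)} D_n(𝒞)`.
-/

def Fin.window {m : ℕ} (s n : ℕ) (h : s + n ≤ m) : Fin n → Fin m := fun i => ⟨s + i, by omega⟩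

@[simp]
theorem Fin.val_window {n m s : ℕ} (h : s + n ≤ m) (i : Fin n) : (Fin.window s n h i : ℕ) = s + i :=
  rfl

theorem Fin.window_injective {n m s : ℕ} (h : s + n ≤ m) : Function.Injective (Fin.window s n h) :=
  fun i j hij => Fin.ext (by simpa using congrArg Fin.val hij)

theorem Fin.mem_range_window {n m s : ℕ} (h : s + n ≤ m) (k : Fin m) :
    k ∈ Set.range (Fin.window s n h) ↔ s ≤ k ∧ (k : ℕ) < s + n := by
  refine ⟨?_, fun hk => ⟨⟨k - s, by omega⟩, Fin.ext (by simp; omega)⟩⟩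
  rintro ⟨i, rfl⟩
  simp

namespace Matrix

variable {l m n o p q R : Type*}

section Semiring

variable [Semiring R]

-- Factored through `n` so that `det (1 - A * B) = det (1 - B * A)` can move the selection around.
def colRestrict [Fintype n] [DecidableEq m] (M : Matrix l m R) (ι : n → m) : Matrix l m R :=
  M.submatrix id ι * (1 : Matrix m m R).submatrix ι id

theorem colRestrict_apply [Fintype n] [DecidableEq m] (M : Matrix l m R) {ι : n → m}
    (hι : Function.Injective ι) (j : l) (k : m) :
    colRestrict M ι j k = if k ∈ Set.range ι then M j k else 0 := by
  rw [colRestrict, mul_apply]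
  simp_rw [submatrix_apply, id_eq, one_apply, mul_ite, mul_one, mul_zero]
  split_ifs with hk
  · obtain ⟨i, rfl⟩ := hk
    exact (Fintype.sum_eq_single i fun x hx => if_neg (hι.ne hx)).trans (if_pos rfl)
  · exact Finset.sum_eq_zero fun i _ => if_neg fun h => hk ⟨i, h⟩

theorem submatrix_mul_of_injective [Fintype m] [Fintype q] (A : Matrix l m R) (B : Matrix m n R)
    (ι : o → l) (κ : p → n) {μ : q → m} (hμ : Function.Injective μ)
    (h : ∀ i k j, j ∉ Set.range μ → A (ι i) j * B j (κ k) = 0) :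
    (A * B).submatrix ι κ = A.submatrix ι μ * B.submatrix μ κ := by
  ext i k
  exact (Fintype.sum_of_injective μ hμ _ _ (h i k) fun _ => rfl).symm

theorem colRestrict_window_apply {m n s : ℕ}
    (M : Matrix l (Fin m) R) (h : s + n ≤ m) (j : l) (k : Fin m) :
    colRestrict M (Fin.window s n h) j k = if s ≤ k ∧ (k : ℕ) < s + n then M j k else 0 := by
  rw [colRestrict_apply M (Fin.window_injective h)]
  exact if_congr (Fin.mem_range_window h k) rfl rfl

end Semiring

section CommRing

variable [CommRing R]

theorem det_fromBlocks_smul_smul [Fintype m] [Fintype n] [DecidableEq m] [DecidableEq n]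
    (A : Matrix m m R) (B : Matrix m n R) (C : Matrix n m R) (D : Matrix n n R) {ε : R}
    (hε : ε * ε = 1) :
    (fromBlocks A (ε • B) (ε • C) D).det = (fromBlocks A B C D).det := by
  have hconj : fromBlocks A (ε • B) (ε • C) D
      = fromBlocks 1 0 0 (ε • 1) * fromBlocks A B C D * fromBlocks 1 0 0 (ε • 1) := by
    simp [fromBlocks_multiply, smul_smul, hε]
  rw [hconj, det_mul, det_mul, det_fromBlocks_zero₂₁, det_one, det_smul, det_one, one_mul,
    mul_one, mul_right_comm, ← mul_pow, hε, one_pow, one_mul]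

theorem det_fromBlocks_conjTranspose [StarRing R] [Fintype m] [DecidableEq m]
    (T X Y : Matrix m m R) (hT : IsUnit T.det) :
    (fromBlocks T X Y Tᴴ).det = T.det * star T.det * (1 - T⁻¹ᴴ * Y * (T⁻¹ * X)).det := by
  let := T.invertibleOfIsUnitDet hT
  have hTinv : Tᴴ * T⁻¹ᴴ = 1 := by
    rw [← conjTranspose_mul, nonsing_inv_mul T hT, conjTranspose_one]
  have hschur : Tᴴ - Y * T⁻¹ * X = Tᴴ * (1 - T⁻¹ᴴ * Y * (T⁻¹ * X)) := by
    simp only [Matrix.mul_sub, Matrix.mul_one, ← Matrix.mul_assoc, hTinv, Matrix.one_mul]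
  rw [det_fromBlocks₁₁, invOf_eq_nonsing_inv, hschur, det_mul, det_conjTranspose, ← mul_assoc]

theorem det_one_sub_mul_colRestrict [Fintype m] [Fintype n] [DecidableEq m] [DecidableEq n]
    (P Q S U : Matrix m m R) (ι κ : n → m) :
    (1 - P * colRestrict Q ι * (S * colRestrict U κ)).det
      = (1 - (S * U).submatrix ι κ * (P * Q).submatrix κ ι).det := by
  have hleft : ∀ M N : Matrix m m R, ∀ e : n → m, M * N.submatrix id e = (M * N).submatrix id e :=
    fun M N e => by simpa using (submatrix_mul M N id id e Function.bijective_id).symm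
  have hright : ∀ M : Matrix m n R, ∀ e : n → m,
      (1 : Matrix m m R).submatrix e id * M = M.submatrix e id :=
    fun M e => by simpa using (submatrix_mul 1 M e id id Function.bijective_id).symm
  have hfactor : P * colRestrict Q ι * (S * colRestrict U κ)
      = (P * Q).submatrix id ι * ((S * U).submatrix ι κ * (1 : Matrix m m R).submatrix κ id) := by
    calc P * colRestrict Q ι * (S * colRestrict U κ)
        = P * Q.submatrix id ι * ((1 : Matrix m m R).submatrix ι id * (S * U.submatrix id κ)
            * (1 : Matrix m m R).submatrix κ id) := by simp only [colRestrict, Matrix.mul_assoc]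
      _ = _ := by rw [hright, hleft, hleft, submatrix_submatrix]; rfl
  rw [hfactor, det_one_sub_mul_comm, Matrix.mul_assoc, hright, submatrix_submatrix]
  rfl

end CommRing

end Matrix

namespace PowerSeries

open Matrix

variable {R K : Type*}

section Semiring

variable [Semiring R]

/-- The matrix of multiplication by `F` on `R[X] ⧸ (X ^ m)` in the basis `1, X, …, X ^ (m - 1)`:
the lower-triangular Toeplitz matrix with symbol `F`. -/
def toeplitz (m : ℕ) (F : R⟦X⟧) : Matrix (Fin m) (Fin m) R :=
  Matrix.of fun j k => if (k : ℕ) ≤ j then coeff (j - k : ℕ) F else 0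

theorem toeplitz_apply (m : ℕ) (F : R⟦X⟧) (j k : Fin m) :
    toeplitz m F j k = if (k : ℕ) ≤ j then coeff (j - k : ℕ) F else 0 :=
  rfl

theorem toeplitz_mul (m : ℕ) (F G : R⟦X⟧) : toeplitz m F * toeplitz m G = toeplitz m (F * G) := by
  ext j k
  simp only [mul_apply, toeplitz_apply, coeff_mul]
  split_ifs with hkj
  · have hsupp : ∀ p : Fin m, ((if (p : ℕ) ≤ j then coeff (j - p : ℕ) F else 0) *
        if (k : ℕ) ≤ p then coeff (p - k : ℕ) G else 0) ≠ 0 → (k : ℕ) ≤ p ∧ (p : ℕ) ≤ j := by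
      intro p hp
      by_contra hout
      refine hp ?_
      split_ifs <;> first | omega | simp
    refine Finset.sum_bij_ne_zero (fun p _ _ => ((j : ℕ) - p, (p : ℕ) - k)) ?_ ?_ ?_ ?_
    · intro p _ hp
      have := hsupp p hp
      rw [Finset.HasAntidiagonal.mem_antidiagonal]
      omega
    · intro p _ hp q _ hq hpq
      have := hsupp p hp
      have := hsupp q hq
      simp only [Prod.mk.injEq] at hpq
      exact Fin.ext (by omega)
    · rintro ⟨x, y⟩ hxy hne
      rw [Finset.HasAntidiagonal.mem_antidiagonal] at hxy
      refine ⟨⟨k + y, by omega⟩, Finset.mem_univ _, ?_, ?_⟩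
      · simp only [Nat.add_sub_cancel_left, if_pos (show (k : ℕ) ≤ k + y by omega),
          if_pos (show (k : ℕ) + y ≤ j by omega), show (j : ℕ) - (k + y) = x by omega]
        exact hne
      · simp only [Prod.mk.injEq]; omega
    · intro p _ hp
      have := hsupp p hp
      rw [if_pos this.2, if_pos this.1]
  · refine Finset.sum_eq_zero fun p _ => ?_
    split_ifs <;> first | omega | simp

theorem toeplitz_one (m : ℕ) : toeplitz m (1 : R⟦X⟧) = 1 := by
  ext j k
  simp only [toeplitz_apply, coeff_one, one_apply, Fin.ext_iff]
  split_ifs <;> first | rfl | omega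

theorem toeplitz_submatrix_window {m n s : ℕ} (F : R⟦X⟧) (h : s + n ≤ m) :
    (toeplitz m F).submatrix (Fin.window s n h) (Fin.window s n h) = toeplitz n F := by
  ext j k
  simp [toeplitz_apply, Nat.add_sub_add_left]

-- `toeplitz m G` is lower triangular and `toeplitz m F` is banded of width `d`, so only the
-- indices in the window `[s, s + n)` contribute to the entries of the product.
theorem toeplitz_mul_conjTranspose_submatrix_window [StarRing R] {d m n s : ℕ} {F : R⟦X⟧}
    (G : R⟦X⟧)
    (hF : ∀ t, d < t → coeff t F = 0) (hA : s + n ≤ m) (hB : s + d + n ≤ m) :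
    (toeplitz m G * (toeplitz m F)ᴴ).submatrix (Fin.window s n hA) (Fin.window (s + d) n hB)
      = toeplitz n G
        * ((toeplitz m F).submatrix (Fin.window (s + d) n hB) (Fin.window s n hA))ᴴ := by
  rw [submatrix_mul_of_injective _ _ _ _ (Fin.window_injective hA), toeplitz_submatrix_window,
    conjTranspose_submatrix]
  intro i k j hj
  rw [Fin.mem_range_window] at hj
  rw [conjTranspose_apply, toeplitz_apply, toeplitz_apply]
  split_ifs with h1 h2 <;> simp only [Fin.val_window] at *
  · rw [hF _ (by omega), star_zero, mul_zero]
  · rw [star_zero, mul_zero]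
  · rw [zero_mul]
  · rw [zero_mul]

theorem conjTranspose_toeplitz_mul_submatrix_window [StarRing R] {d m n s : ℕ} {F : R⟦X⟧}
    (G : R⟦X⟧)
    (hF : ∀ t, d < t → coeff t F = 0) (hA : s + n ≤ m) (hB : s + d + n ≤ m) :
    ((toeplitz m G)ᴴ * toeplitz m F).submatrix (Fin.window (s + d) n hB) (Fin.window s n hA)
      = (toeplitz n G)ᴴ
        * (toeplitz m F).submatrix (Fin.window (s + d) n hB) (Fin.window s n hA) := by
  rw [submatrix_mul_of_injective _ _ _ _ (Fin.window_injective hB),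
    ← toeplitz_submatrix_window G hB, conjTranspose_submatrix]
  intro i k j hj
  rw [Fin.mem_range_window] at hj
  rw [conjTranspose_apply, toeplitz_apply, toeplitz_apply]
  split_ifs with h1 h2 <;> simp only [Fin.val_window] at *
  · rw [hF _ (by omega), mul_zero]
  · rw [mul_zero]
  · rw [star_zero, zero_mul]
  · rw [star_zero, zero_mul]

end Semiring

theorem det_toeplitz [CommRing R] (m : ℕ) (F : R⟦X⟧) :
    (toeplitz m F).det = constantCoeff F ^ m := by
  rw [det_of_isLowerTriangular (toeplitz m F) fun j k hjk => if_neg (by simpa using hjk)]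
  simp [toeplitz_apply]

section Field

variable [Field K]

theorem inv_toeplitz (m : ℕ) {F : K⟦X⟧} (hF : constantCoeff F ≠ 0) :
    (toeplitz m F)⁻¹ = toeplitz m F⁻¹ :=
  inv_eq_right_inv (by rw [toeplitz_mul, PowerSeries.mul_inv_cancel F hF, toeplitz_one])

theorem det_fromBlocks_toeplitz_colRestrict [StarRing K] {d m n s : ℕ} {F : K⟦X⟧}
    (hF : ∀ t, d < t → coeff t F = 0) (hF0 : constantCoeff F ≠ 0) (hA : s + n ≤ m)
    (hB : s + d + n ≤ m) :
    (fromBlocks (toeplitz m F) (colRestrict (toeplitz m F)ᴴ (Fin.window (s + d) n hB))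
        (colRestrict (toeplitz m F) (Fin.window s n hA)) (toeplitz m F)ᴴ).det
        * (constantCoeff F * star (constantCoeff F)) ^ n
      = (constantCoeff F * star (constantCoeff F)) ^ m
        * (fromBlocks (toeplitz n F)
            ((toeplitz m F).submatrix (Fin.window (s + d) n hB) (Fin.window s n hA))ᴴ
            ((toeplitz m F).submatrix (Fin.window (s + d) n hB) (Fin.window s n hA))
            (toeplitz n F)ᴴ).det := by
  have hunit : ∀ k, IsUnit (toeplitz k F).det := fun k => by
    rw [det_toeplitz]
    exact (hF0.isUnit).pow k
  rw [det_fromBlocks_conjTranspose _ _ _ (hunit m), det_fromBlocks_conjTranspose _ _ _ (hunit n),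
    inv_toeplitz m hF0, inv_toeplitz n hF0, det_one_sub_mul_colRestrict,
    toeplitz_mul_conjTranspose_submatrix_window _ hF,
    conjTranspose_toeplitz_mul_submatrix_window _ hF,
    det_one_sub_mul_comm (toeplitz n F⁻¹ * _), det_toeplitz, det_toeplitz, star_pow, star_pow]
  ring

end Field

end PowerSeries

open PowerSeries

/-- The power series `X ^ d * f (X⁻¹)` of the polynomial `f = ∑_{k ≤ d} a k * X ^ k`. -/
def reverseSeries (d : ℕ) (a : ℕ → ℂ) : PowerSeries ℂ :=
  PowerSeries.mk fun t => if t ≤ d then a (d - t) else 0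

theorem coeff_reverseSeries (d : ℕ) (a : ℕ → ℂ) (t : ℕ) :
    coeff t (reverseSeries d a) = if t ≤ d then a (d - t) else 0 :=
  coeff_mk _ _

theorem coeff_reverseSeries_of_lt {d t : ℕ} (a : ℕ → ℂ) (h : d < t) :
    coeff t (reverseSeries d a) = 0 := by
  rw [coeff_reverseSeries, if_neg (by omega)]

theorem constantCoeff_reverseSeries (d : ℕ) (a : ℕ → ℂ) :
    constantCoeff (reverseSeries d a) = a d := by
  rw [← coeff_zero_eq_constantCoeff_apply, coeff_reverseSeries, if_pos (Nat.zero_le d),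
    Nat.sub_zero]

theorem toeplitz_submatrix_window_eq_SCN {d m n s : ℕ} (a : ℕ → ℂ) (hn : n ≤ d) (hA : s + n ≤ m)
    (hB : s + d + n ≤ m) :
    (toeplitz m (reverseSeries d a)).submatrix (Fin.window (s + d) n hB) (Fin.window s n hA)
      = SCN a n := by
  ext j k
  rw [submatrix_apply, toeplitz_apply, coeff_reverseSeries]
  simp only [SCN, of_apply]
  split_ifs <;> simp only [Fin.val_window] at * <;> first | rfl | omega | (congr 1; omega)

theorem SCL_one_eq_fromBlocks {d n : ℕ} (a : ℕ → ℂ) (hn : n ≤ d) :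
    SCL a d n 1 = fromBlocks (toeplitz n (reverseSeries d a)) (SCN a n)ᴴ (SCN a n)
      (toeplitz n (reverseSeries d a))ᴴ := by
  have hM : (SCM a d n)ᵀ = toeplitz n (reverseSeries d a) := by
    ext j k
    rw [transpose_apply, toeplitz_apply, coeff_reverseSeries]
    simp only [SCM, of_apply]
    split_ifs <;> first | rfl | omega
  rw [SCL, one_smul, one_smul, ← hM]
  rfl

theorem rv_mul_eq_two_mul_Lv (d : ℕ) : rv d * d = 2 * Lv d := by
  unfold rv Lv
  split_ifs with h
  · obtain ⟨k, rfl⟩ := h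
    push_cast
    omega
  · ring

theorem coeffC_of_cast_eq {d t : ℕ} (C : ℤ → ℂ) {x : ℤ} (h : (t : ℤ) = x) :
    coeffC d C t = C (Lv d - rv d * x) := by
  rw [coeffC, h]

theorem e0mat_eq (d : ℕ) (C : ℤ → ℂ) :
    e0mat d C = toeplitz (2 * d) (reverseSeries d (coeffC d C)) := by
  ext j k
  rw [toeplitz_apply, coeff_reverseSeries]
  simp only [e0mat, of_apply]
  split_ifs <;> try first | rfl | omega
  rw [coeffC_of_cast_eq C (x := d - ((j - k : ℕ) : ℤ)) (by omega)]
  congr 1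
  linear_combination rv_mul_eq_two_mul_Lv d

theorem Jmat_mul_mul_Jmat (d : ℕ) (M : Matrix (Fin (2 * d)) (Fin (2 * d)) ℂ) :
    Jmat d * M * Jmat d = M.submatrix Fin.rev Fin.rev := by
  have hJ : ∀ j k : Fin (2 * d), Jmat d j k = if j = Fin.rev k then 1 else 0 := fun j k => by
    simp only [Jmat, of_apply, Fin.ext_iff, Fin.val_rev]
    split_ifs <;> first | rfl | omega
  calc Jmat d * M * Jmat d
      = (1 : Matrix (Fin (2 * d)) (Fin (2 * d)) ℂ).submatrix id Fin.revPerm * M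
          * (1 : Matrix (Fin (2 * d)) (Fin (2 * d)) ℂ).submatrix Fin.revPerm id := by
        congr 2 <;> ext j k <;> simp only [hJ, submatrix_apply, one_apply, id_eq, Fin.revPerm_apply]
        exact if_congr ⟨by rintro rfl; simp, by rintro rfl; simp⟩ rfl rfl
    _ = M.submatrix Fin.rev Fin.rev := by
        rw [one_submatrix_mul, mul_submatrix_one]
        rfl

theorem map_conj_e2mat {d n : ℕ} (C : ℤ → ℂ) (hn : n ≤ d) :
    (e2mat d n C).map (starRingEnd ℂ) =
      colRestrict (e0mat d C)ᴴ (Fin.window (d - n + d) n (by omega)) := by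
  rw [e0mat_eq]
  ext j k
  rw [colRestrict_window_apply, map_apply,
    conjTranspose_apply, toeplitz_apply, coeff_reverseSeries]
  simp only [e2mat, of_apply]
  split_ifs <;> first
    | rfl | omega
    | exact congrArg _ (coeffC_of_cast_eq C (by omega)).symm
    | simp

theorem map_conj_e1mat {d n : ℕ} (C : ℤ → ℂ) (hn : n ≤ d) :
    (e1mat d n C).map (starRingEnd ℂ) =
      colRestrict (e0mat d C)ᴴ (Fin.window (0 + d) n (by omega)) := by
  rw [e0mat_eq]
  ext j k
  rw [colRestrict_window_apply, map_apply,
    conjTranspose_apply, toeplitz_apply, coeff_reverseSeries]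
  simp only [e1mat, of_apply]
  split_ifs <;> first
    | rfl | omega
    | exact congrArg _ (coeffC_of_cast_eq C (by omega)).symm
    | simp

theorem Jmat_mul_e1mat_mul_Jmat {d n : ℕ} (C : ℤ → ℂ) (hn : n ≤ d) :
    Jmat d * e1mat d n C * Jmat d = colRestrict (e0mat d C)
      (Fin.window (d - n) n (by omega)) := by
  rw [e0mat_eq]
  ext j k
  rw [Jmat_mul_mul_Jmat, colRestrict_window_apply,
    submatrix_apply, toeplitz_apply, coeff_reverseSeries]
  simp only [e1mat, of_apply, Fin.val_rev]
  split_ifs <;> first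
    | rfl | omega
    | exact (coeffC_of_cast_eq C (by omega)).symm

theorem Jmat_mul_e2mat_mul_Jmat {d n : ℕ} (C : ℤ → ℂ) (hn : n ≤ d) :
    Jmat d * e2mat d n C * Jmat d = colRestrict (e0mat d C)
      (Fin.window 0 n (by omega)) := by
  rw [e0mat_eq]
  ext j k
  rw [Jmat_mul_mul_Jmat, colRestrict_window_apply,
    submatrix_apply, toeplitz_apply, coeff_reverseSeries]
  simp only [e2mat, of_apply, Fin.val_rev]
  split_ifs <;> first
    | rfl | omega
    | exact (coeffC_of_cast_eq C (by omega)).symm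

def blockPairEquiv (α : Type*) : (α ⊕ α) ⊕ (α ⊕ α) ≃ Fin 4 × α where
  toFun
    | .inl (.inl a) => (0, a)
    | .inl (.inr a) => (2, a)
    | .inr (.inl a) => (1, a)
    | .inr (.inr a) => (3, a)
  invFun p :=
    if p.1 = 0 then .inl (.inl p.2)
    else if p.1 = 1 then .inr (.inl p.2)
    else if p.1 = 2 then .inl (.inr p.2)
    else .inr (.inr p.2)
  left_inv := by rintro ((x | x) | (x | x)) <;> simp
  right_inv := by
    rintro ⟨p, x⟩
    fin_cases p <;> simp

theorem bigE0_add_smul_bigEsharp_submatrix (d n : ℕ) (C : ℤ → ℂ) (ε : ℂ) :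
    (bigE0 d C + ε • bigEsharp d n C).submatrix (blockPairEquiv _) (blockPairEquiv _)
      = fromBlocks
          (fromBlocks (e0mat d C) (ε • (e2mat d n C).map (starRingEnd ℂ))
            (ε • (Jmat d * e1mat d n C * Jmat d)) (e0mat d C)ᴴ) 0 0
          (fromBlocks (e0mat d C) (ε • (e1mat d n C).map (starRingEnd ℂ))
            (ε • (Jmat d * e2mat d n C * Jmat d)) (e0mat d C)ᴴ) := by
  ext ((x | x) | (x | x)) ((y | y) | (y | y)) <;>
    simp [blockPairEquiv, bigE0, bigEsharp]

theorem coeffC_self (d : ℕ) (C : ℤ → ℂ) : coeffC d C d = C (-(Lv d)) := by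
  rw [coeffC, rv_mul_eq_two_mul_Lv]
  congr 1
  ring

theorem SCD_eq_det (d : ℕ) (C : ℤ → ℂ) (n : ℕ) : SCD d C n = (SCL (coeffC d C) d n 1).det := by
  unfold SCD
  split_ifs with h
  · subst h
    rw [det_isEmpty]
  · rfl

theorem det_fromBlocks_e0mat_colRestrict {d n s : ℕ} (C : ℤ → ℂ) (hC : C (-(Lv d)) ≠ 0)
    (hs : s + n ≤ d) :
    (fromBlocks (e0mat d C) (colRestrict (e0mat d C)ᴴ (Fin.window (s + d) n (by omega)))
        (colRestrict (e0mat d C) (Fin.window s n (by omega))) (e0mat d C)ᴴ).det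
      = ((‖C (-(Lv d))‖ : ℝ) : ℂ) ^ (2 * (2 * d - n)) * SCD d C n := by
  have hc0 : constantCoeff (reverseSeries d (coeffC d C)) = C (-(Lv d)) := by
    rw [constantCoeff_reverseSeries, coeffC_self]
  have key := det_fromBlocks_toeplitz_colRestrict
    (fun _ => coeff_reverseSeries_of_lt (coeffC d C)) (hc0 ▸ hC)
    (by omega : s + n ≤ 2 * d) (by omega : s + d + n ≤ 2 * d)
  rw [toeplitz_submatrix_window_eq_SCN _ (by omega), ← SCL_one_eq_fromBlocks _ (by omega),
    ← SCD_eq_det, hc0, ← starRingEnd_apply, Complex.mul_conj',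
    ← pow_sub_mul_pow ((‖C (-(Lv d))‖ : ℂ) ^ 2) (show n ≤ 2 * d by omega)] at key
  rw [e0mat_eq, pow_mul]
  exact mul_right_cancel₀ (pow_ne_zero _ (pow_ne_zero _ (by simpa using hC))) (key.trans (by ring))

theorem det_bigE0_add_bigEsharp_general
    (d : ℕ) (C : ℤ → ℂ) (hC : C (Lv d) * C (-(Lv d)) ≠ 0)
    (n : ℕ) (hn : n ≤ d) :
    (bigE0 d C + bigEsharp d n C).det = (bigE0 d C - bigEsharp d n C).det ∧
    (bigE0 d C + bigEsharp d n C).det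
      = ((‖C (-(Lv d))‖ : ℝ) : ℂ) ^ (4 * (2 * d - n)) * (SCD d C n) ^ 2 ∧
    (IsUnit (bigE0 d C + bigEsharp d n C) ↔ SCD d C n ≠ 0) ∧
    (IsUnit (bigE0 d C - bigEsharp d n C) ↔ SCD d C n ≠ 0) := by
  have hc : C (-(Lv d)) ≠ 0 := right_ne_zero_of_mul hC
  set D := ((‖C (-(Lv d))‖ : ℝ) : ℂ) ^ (4 * (2 * d - n)) * (SCD d C n) ^ 2 with hD
  have hdet : ∀ ε : ℂ, ε * ε = 1 → (bigE0 d C + ε • bigEsharp d n C).det = D := by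
    intro ε hε
    rw [← det_submatrix_equiv_self (blockPairEquiv _), bigE0_add_smul_bigEsharp_submatrix,
      det_fromBlocks_zero₂₁, det_fromBlocks_smul_smul _ _ _ _ hε,
      det_fromBlocks_smul_smul _ _ _ _ hε, map_conj_e2mat C hn, map_conj_e1mat C hn,
      Jmat_mul_e1mat_mul_Jmat C hn, Jmat_mul_e2mat_mul_Jmat C hn,
      det_fromBlocks_e0mat_colRestrict C hc (s := d - n) (by omega),
      det_fromBlocks_e0mat_colRestrict C hc (s := 0) (by omega), hD]
    ring
  have hplus : (bigE0 d C + bigEsharp d n C).det = D := by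
    simpa using hdet 1 (one_mul 1)
  have hminus : (bigE0 d C - bigEsharp d n C).det = D := by
    simpa [sub_eq_add_neg] using hdet (-1) (by norm_num)
  have hunit : ∀ M : Matrix (Fin 4 × Fin (2 * d)) (Fin 4 × Fin (2 * d)) ℂ,
      M.det = D → (IsUnit M ↔ SCD d C n ≠ 0) := fun M hM => by
    rw [isUnit_iff_isUnit_det, hM, isUnit_iff_ne_zero, hD, mul_ne_zero_iff]
    simp [hc]
  exact ⟨hplus.trans hminus.symm, hplus, hunit _ hplus, hunit _ hminus⟩

/-- Lemma 3.5: `det(𝔈₀ + 𝔈ₙ^♯) = det(𝔈₀ − 𝔈ₙ^♯) = |C_{−L}|^{4(2d−n)}·D_n(𝒞)²`; in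
particular `𝔈₀ ± 𝔈ₙ^♯` are invertible iff `D_n(𝒞) ≠ 0`. -/
theorem det_bigE0_add_bigEsharp
    (d : ℕ) (hd : 0 < d) (C : ℤ → ℂ) (hC : C (Lv d) * C (-(Lv d)) ≠ 0)
    (n : ℕ) (hn : n ≤ d) :
    (bigE0 d C + bigEsharp d n C).det = (bigE0 d C - bigEsharp d n C).det ∧
    (bigE0 d C + bigEsharp d n C).det
      = ((‖C (-(Lv d))‖ : ℝ) : ℂ) ^ (4 * (2 * d - n)) * (SCD d C n) ^ 2 ∧
    (IsUnit (bigE0 d C + bigEsharp d n C) ↔ SCD d C n ≠ 0) ∧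
    (IsUnit (bigE0 d C - bigEsharp d n C) ↔ SCD d C n ≠ 0) :=
  det_bigE0_add_bigEsharp_general d C hC n hn
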